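/- Let v be a pseudo-valuation on K[T], φ a key polynomial over v, and λ > v(φ). Then the augmentation w defined by w(f) = min_{0≤i≤m} (v(a_i) + iλ), where f = Σ_{i=0}^m a_i φ^i is the φ-adic expansion of f, is again a pseudo-valuation on K[T]. -/

import Mathlib

open Polynomial

/-- `v` is a pseudo-valuation on `K[T]` over the valuation `vK` on `K`. -/
def IsPseudoValuation {K : Type*} [Field K] (vK : K → EReal)
    (v : Polynomial K → EReal) : Prop :=
  0 ≤ v X ∧
  (∀ f g : Polynomial K, min (v f) (v g) ≤ v (f + g)) ∧
  (∀ f g : Polynomial K, v (f * g) = v f + v g) ∧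
  (∀ c : K, v (C c) = vK c)

/-- `f ∼_v g` iff `v(f-g) > v(f)`, or `f = g = 0`. -/
def VEquiv {K : Type*} [Field K] (v : Polynomial K → EReal)
    (f g : Polynomial K) : Prop :=
  v f < v (f - g) ∨ (f = 0 ∧ g = 0)

/-- `g |_v f` iff `f ∼_v q·g` for some `q`. -/
def VDvd {K : Type*} [Field K] (v : Polynomial K → EReal)
    (g f : Polynomial K) : Prop :=
  ∃ q : Polynomial K, VEquiv v f (q * g)

/-- A key polynomial over `v`: a monic, non-constant, `v`-irreducible and
`v`-minimal polynomial. -/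
def IsKeyPolynomial {K : Type*} [Field K] (v : Polynomial K → EReal)
    (φ : Polynomial K) : Prop :=
  φ.Monic ∧ 0 < φ.natDegree ∧
  (∀ f g : Polynomial K, VDvd v φ (f * g) → VDvd v φ f ∨ VDvd v φ g) ∧
  (∀ f : Polynomial K, f ≠ 0 → VDvd v φ f → φ.degree ≤ f.degree)

/-!
Writing a polynomial as `r + φ * h` with `deg r < deg φ`, the defining formula reads
`w (r + φ * h) = min (v r) (w h + λ)`, and every property of `w` is proved by induction along
this decomposition. Minimality of `φ` gives the analogue `v (r + φ * h) = min (v r) (v (φ * h))`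
for `v` itself (otherwise `φ |_v r`), whence `v ≤ w`; irreducibility then shows that if
`a * b = s + φ * t` with `a, b, s` of degree `< deg φ`, then `v s = v a + v b ≤ v (φ * t)`.
This gives `w f + w g ≤ w (f * g)`. For the reverse inequality, with `f = r + φ * h` and
`g = b + φ * G`: if `w f < v r` then `φ * h * g` strictly dominates `r * g` (symmetrically in
`g`); otherwise `w f = v r`, `w g = v b`, and the lowest digit `s` of `f * g` gives
`w (f * g) ≤ v s = w f + w g`.
-/

theorem EReal.iInf_range_add_nsmul (x : ℕ → EReal) (lam : EReal) (m : ℕ) :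
    ⨅ i ∈ Finset.range (m + 2), (x i + i • lam) =
      min (x 0) ((⨅ i ∈ Finset.range (m + 1), (x (i + 1) + i • lam)) + lam) := by
  have hne : (Finset.range (m + 1)).Nonempty := Finset.nonempty_range_add_one
  rw [← Finset.inf_eq_iInf, ← Finset.inf_eq_iInf, Finset.range_add_one' (m + 1), Finset.inf_insert,
    Finset.inf_map, ← Finset.inf'_eq_inf hne, ← Finset.inf'_eq_inf hne,
    Finset.apply_inf'_eq_inf'_comp hne (· + lam) fun a b => (min_add_add_right a b lam).symm,
    zero_smul, add_zero]
  congr 1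
  exact Finset.inf'_congr hne rfl fun i _ => by
    show x (i + 1) + (i + 1) • lam = x (i + 1) + i • lam + lam
    rw [succ_nsmul, add_assoc]

theorem Polynomial.add_mul_sum_mul_pow {R : Type*} [CommRing R] (φ r : R[X]) (a : ℕ → R[X])
    (m : ℕ) :
    r + φ * ∑ i ∈ Finset.range (m + 1), a i * φ ^ i =
      ∑ i ∈ Finset.range (m + 2), (fun | 0 => r | j + 1 => a j) i * φ ^ i := by
  rw [Finset.sum_range_succ' _ (m + 1), Finset.mul_sum, add_comm]
  simp only [pow_zero, mul_one]
  exact congrArg (· + r) (Finset.sum_congr rfl fun i _ => by ring)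

namespace Polynomial.Monic

variable {R : Type*} [CommRing R] [Nontrivial R] {φ : R[X]}

theorem induction_on_add_mul (hφ : φ.Monic) (hdeg : 0 < φ.natDegree) {P : R[X] → Prop}
    (zero : P 0) (add_mul : ∀ r h, r.degree < φ.degree → P h → P (r + φ * h)) (f : R[X]) :
    P f := by
  induction hn : f.natDegree using Nat.strong_induction_on generalizing f with
  | _ n ih =>
    rw [← modByMonic_add_div f φ]
    refine add_mul _ _ (degree_modByMonic_lt f hφ) ?_
    by_cases hq : f /ₘ φ = 0
    · rw [hq]
      exact zero
    · have hf : f ≠ 0 := fun hf => hq (by rw [hf, zero_divByMonic])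
      exact ih _ (hn ▸ natDegree_lt_natDegree hq
        (degree_divByMonic_lt f φ hf (natDegree_pos_iff_degree_pos.mp hdeg))) _ rfl

theorem degree_zero_lt (hφ : φ.Monic) : (0 : R[X]).degree < φ.degree := by
  simpa [bot_lt_iff_ne_bot] using hφ.ne_zero

theorem exists_eq_sum_mul_pow (hφ : φ.Monic) (hdeg : 0 < φ.natDegree) (f : R[X]) :
    ∃ (m : ℕ) (a : ℕ → R[X]), (∀ i, i ≤ m → (a i).degree < φ.degree) ∧
      f = ∑ i ∈ Finset.range (m + 1), a i * φ ^ i := by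
  induction f using hφ.induction_on_add_mul hdeg with
  | zero => exact ⟨0, 0, fun _ _ => hφ.degree_zero_lt, by simp⟩
  | add_mul r h hr ih =>
    obtain ⟨m, a, ha, rfl⟩ := ih
    refine ⟨m + 1, fun | 0 => r | j + 1 => a j, fun i hi => ?_, add_mul_sum_mul_pow φ r a m⟩
    cases i with
    | zero => exact hr
    | succ j => exact ha j (by omega)

end Polynomial.Monic

def IsAugmentation {R : Type*} [CommRing R] (v : R[X] → EReal) (φ : R[X]) (lam : EReal)
    (w : R[X] → EReal) : Prop :=
  ∀ (f : R[X]) (m : ℕ) (a : ℕ → R[X]), (∀ i, i ≤ m → (a i).degree < φ.degree) →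
    f = ∑ i ∈ Finset.range (m + 1), a i * φ ^ i →
    w f = ⨅ i ∈ Finset.range (m + 1), (v (a i) + i • lam)

namespace IsAugmentation

variable {R : Type*} [CommRing R] {v w : R[X] → EReal} {φ : R[X]} {lam : EReal}

theorem eq_of_degree_lt (hw : IsAugmentation v φ lam w) {r : R[X]} (hr : r.degree < φ.degree) :
    w r = v r := by
  simpa using hw r 0 (fun _ => r) (fun _ _ => hr) (by simp)

variable [Nontrivial R]

theorem add_mul_eq_min (hw : IsAugmentation v φ lam w) (hφ : φ.Monic) (hdeg : 0 < φ.natDegree)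
    {r : R[X]} (hr : r.degree < φ.degree) (h : R[X]) :
    w (r + φ * h) = min (v r) (w h + lam) := by
  obtain ⟨m, a, ha, rfl⟩ := hφ.exists_eq_sum_mul_pow hdeg h
  rw [hw _ (m + 1) _ (fun i hi => ?_) (add_mul_sum_mul_pow φ r a m), hw _ m a ha rfl,
    EReal.iInf_range_add_nsmul]
  cases i with
  | zero => exact hr
  | succ j => exact ha j (by omega)

theorem mul_left_eq (hw : IsAugmentation v φ lam w) (hφ : φ.Monic) (hdeg : 0 < φ.natDegree)
    (hv0 : v 0 = ⊤) (h : R[X]) : w (φ * h) = w h + lam := by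
  simpa [hv0] using hw.add_mul_eq_min hφ hdeg hφ.degree_zero_lt h

theorem map_zero (hw : IsAugmentation v φ lam w) (hφ : φ.Monic) (hv0 : v 0 = ⊤) : w 0 = ⊤ :=
  (hw.eq_of_degree_lt hφ.degree_zero_lt).trans hv0

theorem map_neg (hw : IsAugmentation v φ lam w) (hφ : φ.Monic) (hdeg : 0 < φ.natDegree)
    (hneg : ∀ f, v (-f) = v f) (f : R[X]) : w (-f) = w f := by
  induction f using hφ.induction_on_add_mul hdeg with
  | zero => rw [neg_zero]
  | add_mul r h hr ih =>
    rw [neg_add, ← mul_neg, hw.add_mul_eq_min hφ hdeg (by rwa [degree_neg]),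
      hw.add_mul_eq_min hφ hdeg hr, hneg, ih]

theorem min_le_add (hw : IsAugmentation v φ lam w) (hφ : φ.Monic) (hdeg : 0 < φ.natDegree)
    (hadd : ∀ f g, min (v f) (v g) ≤ v (f + g)) (f g : R[X]) : min (w f) (w g) ≤ w (f + g) := by
  induction f using hφ.induction_on_add_mul hdeg generalizing g with
  | zero => rw [zero_add]; exact min_le_right _ _
  | add_mul r h hr ih =>
    have hb := degree_modByMonic_lt g hφ
    rw [← modByMonic_add_div g φ, add_add_add_comm, ← mul_add,
      hw.add_mul_eq_min hφ hdeg hr, hw.add_mul_eq_min hφ hdeg hb,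
      hw.add_mul_eq_min hφ hdeg ((degree_add_le _ _).trans_lt (max_lt hr hb)), min_min_min_comm,
      min_add_add_right]
    exact min_le_min (hadd _ _) (add_le_add_left (ih _) _)

end IsAugmentation

theorem add_eq_left_of_lt {M α : Type*} [AddGroup M] [LinearOrder α] {u : M → α}
    (hadd : ∀ x y, min (u x) (u y) ≤ u (x + y)) (hneg : ∀ x, u (-x) = u x) {x y : M}
    (h : u x < u y) : u (x + y) = u x := by
  refine le_antisymm ?_ ((le_min le_rfl h.le).trans (hadd x y))
  have := hadd (x + y) (-y)
  rw [add_neg_cancel_right, hneg] at this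
  exact (min_le_iff.mp this).resolve_right h.not_ge

namespace IsPseudoValuation

variable {K : Type*} [Field K] {vK : K → EReal} {v : K[X] → EReal}

theorem map_neg (hv : IsPseudoValuation vK v) (f : K[X]) : v (-f) = v f := by
  have h : v (-f) + v (-f) = v f + v f := by rw [← hv.2.2.1, ← hv.2.2.1, neg_mul_neg]
  exact StrictMono.injective (fun _ _ hab => EReal.add_lt_add hab hab) h

theorem ne_bot (hv : IsPseudoValuation vK v) (hv0 : v 0 = ⊤) (f : K[X]) : v f ≠ ⊥ := by
  intro hf
  have := hv.2.2.1 0 f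
  rw [zero_mul, hv0, hf, EReal.add_bot] at this
  exact top_ne_bot this

end IsPseudoValuation

namespace IsKeyPolynomial

variable {K : Type*} [Field K] {vK : K → EReal} {v : K[X] → EReal} {φ : K[X]}

theorem not_vDvd_of_degree_lt (hφ : IsKeyPolynomial v φ) {f : K[X]} (hf : f ≠ 0)
    (hdeg : f.degree < φ.degree) : ¬ VDvd v φ f :=
  fun h => (hφ.2.2.2 f hf h).not_gt hdeg

theorem add_mul_le (hφ : IsKeyPolynomial v φ) (hv0 : v 0 = ⊤) {r : K[X]}
    (hr : r.degree < φ.degree) (h : K[X]) : v (r + φ * h) ≤ v r := by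
  by_contra! hlt
  have hr0 : r ≠ 0 := by
    rintro rfl
    exact not_top_lt (hv0 ▸ hlt)
  refine hφ.not_vDvd_of_degree_lt hr0 hr ⟨-h, Or.inl ?_⟩
  rwa [show r - -h * φ = r + φ * h by ring]

theorem add_mul_eq_min (hφ : IsKeyPolynomial v φ) (hv : IsPseudoValuation vK v)
    (hv0 : v 0 = ⊤) {r : K[X]} (hr : r.degree < φ.degree) (h : K[X]) :
    v (r + φ * h) = min (v r) (v (φ * h)) := by
  rcases le_or_gt (v r) (v (φ * h)) with hle | hlt
  · exact le_antisymm ((hφ.add_mul_le hv0 hr h).trans_eq (min_eq_left hle).symm) (hv.2.1 _ _)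
  · rw [min_eq_right hlt.le, add_comm]
    exact add_eq_left_of_lt hv.2.1 hv.map_neg hlt

theorem modByMonic_mul (hφ : IsKeyPolynomial v φ) (hv : IsPseudoValuation vK v)
    (hv0 : v 0 = ⊤) {a b : K[X]} (ha : a.degree < φ.degree) (hb : b.degree < φ.degree) :
    v ((a * b) %ₘ φ) = v a + v b ∧ v a + v b ≤ v (φ * ((a * b) /ₘ φ)) := by
  set s := (a * b) %ₘ φ
  set t := (a * b) /ₘ φ
  have hab : s + φ * t = a * b := modByMonic_add_div _ _
  have hmin := hφ.add_mul_eq_min hv hv0 (degree_modByMonic_lt (a * b) hφ.1) t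
  rw [hab] at hmin
  have hst : v s ≤ v (φ * t) := by
    by_contra! hlt
    rw [min_eq_right hlt.le] at hmin
    have hequiv : v (a * b) < v (a * b - t * φ) := by
      rwa [hmin, show a * b - t * φ = s by rw [← hab]; ring]
    have hab0 : a * b ≠ 0 := by
      rintro h0
      rw [h0, hv0] at hequiv
      exact not_top_lt hequiv
    rcases hφ.2.2.1 a b ⟨t, Or.inl hequiv⟩ with h | h
    · exact hφ.not_vDvd_of_degree_lt (left_ne_zero_of_mul hab0) ha h
    · exact hφ.not_vDvd_of_degree_lt (right_ne_zero_of_mul hab0) hb h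
  rw [min_eq_left hst, hv.2.2.1] at hmin
  exact ⟨hmin.symm, hmin ▸ hst⟩

end IsKeyPolynomial

namespace IsAugmentation

variable {K : Type*} [Field K] {vK : K → EReal} {v w : K[X] → EReal} {φ : K[X]} {lam : EReal}

theorem base_le (hw : IsAugmentation v φ lam w) (hv : IsPseudoValuation vK v) (hv0 : v 0 = ⊤)
    (hφ : IsKeyPolynomial v φ) (hlam : v φ < lam) (f : K[X]) : v f ≤ w f := by
  induction f using hφ.1.induction_on_add_mul hφ.2.1 with
  | zero => rw [hw.map_zero hφ.1 hv0, hv0]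
  | add_mul r h hr ih =>
    rw [hφ.add_mul_eq_min hv hv0 hr, hw.add_mul_eq_min hφ.1 hφ.2.1 hr, hv.2.2.1, add_comm (v φ)]
    exact min_le_min le_rfl (add_le_add ih hlam.le)

theorem ne_bot (hw : IsAugmentation v φ lam w) (hv : IsPseudoValuation vK v) (hv0 : v 0 = ⊤)
    (hφ : IsKeyPolynomial v φ) (hlam : v φ < lam) (f : K[X]) : w f ≠ ⊥ :=
  ne_bot_of_le_ne_bot (hv.ne_bot hv0 f) (hw.base_le hv hv0 hφ hlam f)

theorem add_le_mul_of_degree_lt (hw : IsAugmentation v φ lam w) (hv : IsPseudoValuation vK v)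
    (hv0 : v 0 = ⊤) (hφ : IsKeyPolynomial v φ) (hlam : v φ < lam) {r : K[X]}
    (hr : r.degree < φ.degree) (g : K[X]) : v r + w g ≤ w (r * g) := by
  induction g using hφ.1.induction_on_add_mul hφ.2.1 with
  | zero => rw [mul_zero, hw.map_zero hφ.1 hv0]; exact le_top
  | add_mul b G hb ih =>
    obtain ⟨hs, ht⟩ := hφ.modByMonic_mul hv hv0 hr hb
    have hrg : r * (b + φ * G) = (r * b) %ₘ φ + φ * ((r * b) /ₘ φ + r * G) := by
      linear_combination -modByMonic_add_div (r * b) φ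
    rw [hrg, hw.add_mul_eq_min hφ.1 hφ.2.1 (degree_modByMonic_lt _ hφ.1),
      hw.add_mul_eq_min hφ.1 hφ.2.1 hb, hs, ← min_add_add_left]
    refine le_min (min_le_left _ _) ?_
    have hquot : v r + v b ≤ w ((r * b) /ₘ φ) + lam := by
      refine ht.trans ?_
      rw [hv.2.2.1, add_comm]
      exact add_le_add (hw.base_le hv hv0 hφ hlam _) hlam.le
    calc min (v r + v b) (v r + (w G + lam))
        ≤ min (w ((r * b) /ₘ φ) + lam) (w (r * G) + lam) :=
          min_le_min hquot (by rw [← add_assoc]; exact add_le_add_left ih _)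
      _ = min (w ((r * b) /ₘ φ)) (w (r * G)) + lam := min_add_add_right _ _ _
      _ ≤ w ((r * b) /ₘ φ + r * G) + lam :=
          add_le_add_left (hw.min_le_add hφ.1 hφ.2.1 hv.2.1 _ _) _

theorem add_le_mul (hw : IsAugmentation v φ lam w) (hv : IsPseudoValuation vK v)
    (hv0 : v 0 = ⊤) (hφ : IsKeyPolynomial v φ) (hlam : v φ < lam) (f g : K[X]) :
    w f + w g ≤ w (f * g) := by
  induction f using hφ.1.induction_on_add_mul hφ.2.1 with
  | zero => rw [zero_mul, hw.map_zero hφ.1 hv0]; exact le_top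
  | add_mul r h hr ih =>
    rw [hw.add_mul_eq_min hφ.1 hφ.2.1 hr, ← min_add_add_right, add_mul, mul_assoc]
    calc min (v r + w g) (w h + lam + w g)
        ≤ min (w (r * g)) (w (h * g) + lam) :=
          min_le_min (hw.add_le_mul_of_degree_lt hv hv0 hφ hlam hr g)
            (by rw [add_right_comm]; exact add_le_add_left ih _)
      _ = min (w (r * g)) (w (φ * (h * g))) := by rw [hw.mul_left_eq hφ.1 hφ.2.1 hv0]
      _ ≤ w (r * g + φ * (h * g)) := hw.min_le_add hφ.1 hφ.2.1 hv.2.1 _ _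

theorem mul_le_add_of_lt (hw : IsAugmentation v φ lam w) (hv : IsPseudoValuation vK v)
    (hv0 : v 0 = ⊤) (hφ : IsKeyPolynomial v φ) (hlam : v φ < lam) {r h : K[X]}
    (hr : r.degree < φ.degree) (hlt : w h + lam < v r) {g : K[X]}
    (ih : w (h * g) ≤ w h + w g) : w ((r + φ * h) * g) ≤ w (r + φ * h) + w g := by
  have hf : w (r + φ * h) = w h + lam := by
    rw [hw.add_mul_eq_min hφ.1 hφ.2.1 hr, min_eq_right hlt.le]
  rcases eq_or_ne (w g) ⊤ with hg | hg
  · rw [hg, EReal.add_top_of_ne_bot (hw.ne_bot hv hv0 hφ hlam _)]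
    exact le_top
  have hφhg : w (φ * (h * g)) ≤ w h + lam + w g := by
    rw [hw.mul_left_eq hφ.1 hφ.2.1 hv0, add_right_comm]
    exact add_le_add_left ih _
  have hrg : w (φ * (h * g)) < w (r * g) := by
    have hgr := hw.add_le_mul_of_degree_lt hv hv0 hφ hlam hr g
    lift w g to ℝ using ⟨hg, hw.ne_bot hv hv0 hφ hlam g⟩ with c
    exact hφhg.trans_lt ((EReal.add_lt_add_right_coe hlt c).trans_le hgr)
  rw [add_mul, mul_assoc, add_comm, add_eq_left_of_lt (hw.min_le_add hφ.1 hφ.2.1 hv.2.1)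
    (hw.map_neg hφ.1 hφ.2.1 hv.map_neg) hrg, hf]
  exact hφhg

theorem mul_le_add (hw : IsAugmentation v φ lam w) (hv : IsPseudoValuation vK v)
    (hv0 : v 0 = ⊤) (hφ : IsKeyPolynomial v φ) (hlam : v φ < lam) (f g : K[X]) :
    w (f * g) ≤ w f + w g := by
  induction f using hφ.1.induction_on_add_mul hφ.2.1 generalizing g with
  | zero =>
    rw [zero_mul, hw.map_zero hφ.1 hv0, EReal.top_add_of_ne_bot (hw.ne_bot hv hv0 hφ hlam g)]
  | add_mul r h hr ihf =>
    induction g using hφ.1.induction_on_add_mul hφ.2.1 with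
    | zero =>
      rw [mul_zero, hw.map_zero hφ.1 hv0, EReal.add_top_of_ne_bot (hw.ne_bot hv hv0 hφ hlam _)]
    | add_mul b G hb ihg =>
      rcases lt_or_ge (w h + lam) (v r) with hf | hf
      · exact hw.mul_le_add_of_lt hv hv0 hφ hlam hr hf (ihf _)
      rcases lt_or_ge (w G + lam) (v b) with hg | hg
      · rw [mul_comm, add_comm (w _)]
        exact hw.mul_le_add_of_lt hv hv0 hφ hlam hb hg (by rwa [mul_comm, add_comm (w G)])
      have hfg : (r + φ * h) * (b + φ * G) =
          (r * b) %ₘ φ + φ * ((r * b) /ₘ φ + r * G + h * b + φ * h * G) := by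
        linear_combination -modByMonic_add_div (r * b) φ
      rw [hfg, hw.add_mul_eq_min hφ.1 hφ.2.1 (degree_modByMonic_lt _ hφ.1),
        hw.add_mul_eq_min hφ.1 hφ.2.1 hr, hw.add_mul_eq_min hφ.1 hφ.2.1 hb, min_eq_left hf,
        min_eq_left hg, ← (hφ.modByMonic_mul hv hv0 hr hb).1]
      exact min_le_left _ _

end IsAugmentation

theorem stmt5_general (K : Type*) [Field K]
    (vK : K → EReal)
    (hK0 : ∀ x : K, vK x = ⊤ ↔ x = 0)
    (v : Polynomial K → EReal) (hv : IsPseudoValuation vK v)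
    (φ : Polynomial K) (hφ : IsKeyPolynomial v φ)
    (lam : EReal) (hlam : v φ < lam)
    (w : Polynomial K → EReal)
    (hw : ∀ (f : Polynomial K) (m : ℕ) (a : ℕ → Polynomial K),
      (∀ i, i ≤ m → (a i).degree < φ.degree) →
      f = ∑ i ∈ Finset.range (m + 1), a i * φ ^ i →
      w f = ⨅ i ∈ Finset.range (m + 1), (v (a i) + i • lam)) :
    IsPseudoValuation vK w := by
  have hv0 : v 0 = ⊤ := by rw [← C_0, hv.2.2.2, hK0]
  have hw : IsAugmentation v φ lam w := hw
  refine ⟨hv.1.trans (hw.base_le hv hv0 hφ hlam X), hw.min_le_add hφ.1 hφ.2.1 hv.2.1,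
    fun f g => le_antisymm (hw.mul_le_add hv hv0 hφ hlam f g) (hw.add_le_mul hv hv0 hφ hlam f g),
    fun c => ?_⟩
  rw [hw.eq_of_degree_lt (degree_C_le.trans_lt (natDegree_pos_iff_degree_pos.mp hφ.2.1)), hv.2.2.2]

/-- MacLane augmentation: if `v` is a pseudo-valuation on `K[T]` (`K` a finite
extension of `ℚ_p` with `p`-adic valuation `vK`), `φ` a key polynomial over
`v` and `λ > v(φ)`, then the map `w` sending `f = Σ a_i φ^i` (the `φ`-adic
expansion) to `min_i (v(a_i) + i·λ)` is again a pseudo-valuation. -/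
theorem stmt5 (p : ℕ) [Fact p.Prime] (K : Type*) [Field K] [Algebra ℚ_[p] K]
    [FiniteDimensional ℚ_[p] K]
    (vK : K → EReal)
    (hK0 : ∀ x : K, vK x = ⊤ ↔ x = 0)
    (hKbot : ∀ x : K, vK x ≠ ⊥)
    (hKmul : ∀ x y : K, vK (x * y) = vK x + vK y)
    (hKadd : ∀ x y : K, min (vK x) (vK y) ≤ vK (x + y))
    (hKp : vK ((p : ℚ_[p]) • (1 : K)) = 1)
    (v : Polynomial K → EReal) (hv : IsPseudoValuation vK v)
    (φ : Polynomial K) (hφ : IsKeyPolynomial v φ)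
    (lam : EReal) (hlam : v φ < lam)
    (w : Polynomial K → EReal)
    (hw : ∀ (f : Polynomial K) (m : ℕ) (a : ℕ → Polynomial K),
      (∀ i, i ≤ m → (a i).degree < φ.degree) →
      f = ∑ i ∈ Finset.range (m + 1), a i * φ ^ i →
      w f = ⨅ i ∈ Finset.range (m + 1), (v (a i) + i • lam)) :
    IsPseudoValuation vK w :=
  stmt5_general K vK hK0 v hv φ hφ lam hlam w hw
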